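/- arXiv:2403.15804 — 10 statements merged into one kernel-verified Lean document; each statement's English description precedes it below -/
import Mathlib

section
/- Suppose γ_t·γ_a·t̄_a ≤ γ_o·d̄ + 2·γ_v·d̄/V_d. Then the total cost function c attains its minimum over [0, L_x] at x_f = 0, i.e., c(0) ≤ c(x) for all x ∈ [0, L_x] (the fixed route is optimal). -/
/-! With `y = F x` the demand served by detours, `c x - c 0` is
`(γo d + 2 γv d / Vd - γt γa ta) y + γt H d y² / (2 Vd)`: the hypothesis makes the linear
coefficient nonnegative and the quadratic term is nonnegative, while `y ≥ 0` since `f ≥ 0`. -/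

theorem cost_sub_fixed_route_cost (γt γa γw γo γv ta d H Vd Lx Tl Λ I y : ℝ) (hH : H ≠ 0) :
    (γt * γa * ta * (Λ - y) + γt * γw * Λ * H / 2 + (γt / Vd) * I
      + γt * H * d * y ^ 2 / (2 * Vd)
      + γo * Lx / H + γo * d * y
      + (2 * γv / H) * (Lx / Vd + H * d * y / Vd + Tl))
    - (γt * γa * ta * (Λ - 0) + γt * γw * Λ * H / 2 + (γt / Vd) * I
      + γt * H * d * 0 ^ 2 / (2 * Vd)
      + γo * Lx / H + γo * d * 0
      + (2 * γv / H) * (Lx / Vd + H * d * 0 / Vd + Tl))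
    = (γo * d + 2 * γv * d / Vd - γt * γa * ta) * y + γt * H * d * y ^ 2 / (2 * Vd) := by
  field_simp
  ring

theorem fixed_route_optimal_general
    (γt γa γw γo γv ta d H Vd Lx Tl : ℝ)
    (hγt : 0 < γt) (hd : 0 < d) (hH : 0 < H) (hVd : 0 < Vd)
    (f : ℝ → ℝ)
    (hfpos : ∀ x ∈ Set.Icc (0:ℝ) Lx, 0 ≤ f x)
    (F : ℝ → ℝ) (hF : ∀ x, F x = ∫ t in (0:ℝ)..x, f t)
    (Λ : ℝ)
    (c : ℝ → ℝ)
    (hc : ∀ x, c x =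
      γt * γa * ta * (Λ - F x) + γt * γw * Λ * H / 2
      + (γt / Vd) * (∫ u in (0:ℝ)..Lx, F u)
      + γt * H * d * (F x) ^ 2 / (2 * Vd)
      + γo * Lx / H + γo * d * F x
      + (2 * γv / H) * (Lx / Vd + H * d * F x / Vd + Tl))
    (hcond : γt * γa * ta ≤ γo * d + 2 * γv * d / Vd) :
    ∀ x ∈ Set.Icc (0:ℝ) Lx, c 0 ≤ c x := by
  intro x hx
  have hF0 : F 0 = 0 := by simp [hF]
  have hFx : 0 ≤ F x := by
    rw [hF]
    exact intervalIntegral.integral_nonneg hx.1 fun t ht => hfpos t ⟨ht.1, ht.2.trans hx.2⟩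
  have hdiff : c x - c 0 = (γo * d + 2 * γv * d / Vd - γt * γa * ta) * F x
      + γt * H * d * F x ^ 2 / (2 * Vd) := by
    rw [hc x, hc 0, hF0]
    exact cost_sub_fixed_route_cost γt γa γw γo γv ta d H Vd Lx Tl Λ _ _ hH.ne'
  have hlin : 0 ≤ (γo * d + 2 * γv * d / Vd - γt * γa * ta) * F x :=
    mul_nonneg (sub_nonneg.mpr hcond) hFx
  have hquad : 0 ≤ γt * H * d * F x ^ 2 / (2 * Vd) := by positivity
  linarith

/-- Result 1(a): if the access-cost saving per detour does not exceed the extra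
operating and vehicle cost, the fixed route (x_f = 0) minimizes total cost. -/
theorem fixed_route_optimal
    (γt γa γw γo γv ta d H Vd Lx Tl : ℝ)
    (hγt : 0 < γt) (hγa : 0 < γa) (hγw : 0 < γw) (hγo : 0 < γo) (hγv : 0 < γv)
    (hta : 0 < ta) (hd : 0 < d) (hH : 0 < H) (hVd : 0 < Vd) (hLx : 0 < Lx)
    (hTl : 0 ≤ Tl)
    (f : ℝ → ℝ) (hf : ContinuousOn f (Set.Icc 0 Lx))
    (hfpos : ∀ x ∈ Set.Icc (0:ℝ) Lx, 0 ≤ f x)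
    (F : ℝ → ℝ) (hF : ∀ x, F x = ∫ t in (0:ℝ)..x, f t)
    (Λ : ℝ) (hΛ : Λ = F Lx)
    (c : ℝ → ℝ)
    (hc : ∀ x, c x =
      γt * γa * ta * (Λ - F x) + γt * γw * Λ * H / 2
      + (γt / Vd) * (∫ u in (0:ℝ)..Lx, F u)
      + γt * H * d * (F x) ^ 2 / (2 * Vd)
      + γo * Lx / H + γo * d * F x
      + (2 * γv / H) * (Lx / Vd + H * d * F x / Vd + Tl))
    (hcond : γt * γa * ta ≤ γo * d + 2 * γv * d / Vd) :
    ∀ x ∈ Set.Icc (0:ℝ) Lx, c 0 ≤ c x :=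
  fixed_route_optimal_general γt γa γw γo γv ta d H Vd Lx Tl hγt hd hH hVd f hfpos F hF Λ c hc hcond
end

section
/- Suppose γ_t·γ_a·t̄_a < γ_o·d̄ + 2·γ_v·d̄/V_d and f(x) > 0 for all x ∈ (0, L_x]. Then c(0) < c(x) for every x ∈ (0, L_x], so x_f = 0 is the unique minimizer of c on [0, L_x]. -/
/-!
The cost depends on the split point `x` only through the demand `q = F x` served before it,
and as a function of `q` it is a convex quadratic whose slope at `q = 0` is the strictly
positive margin `γo d + 2 γv d / Vd - γt γa ta`. Hence the cost increases strictly in `q ≥ 0`,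
and a strictly positive demand density makes `F x > 0 = F 0` for every `x > 0`.
-/

open Set

section RouteCost

variable (γt γa γw γo γv ta d H Vd Lx Tl Λ I : ℝ)

/-- The cost `c x` written as a function of `q = F x`, with `I = ∫₀^Lx F`. -/
noncomputable def routeCost (q : ℝ) : ℝ :=
  γt * γa * ta * (Λ - q) + γt * γw * Λ * H / 2
    + (γt / Vd) * I
    + γt * H * d * q ^ 2 / (2 * Vd)
    + γo * Lx / H + γo * d * q
    + (2 * γv / H) * (Lx / Vd + H * d * q / Vd + Tl)

variable {H Vd}

theorem routeCost_sub_routeCost_zero (hH : H ≠ 0) (hVd : Vd ≠ 0) (q : ℝ) :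
    routeCost γt γa γw γo γv ta d H Vd Lx Tl Λ I q
        - routeCost γt γa γw γo γv ta d H Vd Lx Tl Λ I 0
      = (γo * d + 2 * γv * d / Vd - γt * γa * ta) * q + γt * H * d * q ^ 2 / (2 * Vd) := by
  unfold routeCost
  field_simp
  ring

variable {γt γa γo γv ta d}

theorem routeCost_zero_lt (hγt : 0 < γt) (hd : 0 < d) (hH : 0 < H) (hVd : 0 < Vd)
    (hmargin : γt * γa * ta < γo * d + 2 * γv * d / Vd) {q : ℝ} (hq : 0 < q) :
    routeCost γt γa γw γo γv ta d H Vd Lx Tl Λ I 0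
      < routeCost γt γa γw γo γv ta d H Vd Lx Tl Λ I q := by
  have hdiff := routeCost_sub_routeCost_zero γt γa γw γo γv ta d Lx Tl Λ I hH.ne' hVd.ne' q
  have hlinear : 0 < (γo * d + 2 * γv * d / Vd - γt * γa * ta) * q :=
    mul_pos (sub_pos.mpr hmargin) hq
  have hquadratic : 0 ≤ γt * H * d * q ^ 2 / (2 * Vd) := by positivity
  linarith

end RouteCost

theorem fixed_route_unique_optimal_general
    (γt γa γw γo γv ta d H Vd Lx Tl : ℝ)
    (hγt : 0 < γt)
    (hd : 0 < d) (hH : 0 < H) (hVd : 0 < Vd)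
    (f : ℝ → ℝ) (hf : ContinuousOn f (Set.Icc 0 Lx))
    (F : ℝ → ℝ) (hF : ∀ x, F x = ∫ t in (0:ℝ)..x, f t)
    (Λ : ℝ)
    (c : ℝ → ℝ)
    (hc : ∀ x, c x =
      γt * γa * ta * (Λ - F x) + γt * γw * Λ * H / 2
      + (γt / Vd) * (∫ u in (0:ℝ)..Lx, F u)
      + γt * H * d * (F x) ^ 2 / (2 * Vd)
      + γo * Lx / H + γo * d * F x
      + (2 * γv / H) * (Lx / Vd + H * d * F x / Vd + Tl))
    (hcond : γt * γa * ta < γo * d + 2 * γv * d / Vd)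
    (hfpos' : ∀ x ∈ Set.Ioc (0:ℝ) Lx, 0 < f x) :
    ∀ x ∈ Set.Ioc (0:ℝ) Lx, c 0 < c x := by
  rintro x ⟨hx0, hxL⟩
  have hcF : ∀ y, c y = routeCost γt γa γw γo γv ta d H Vd Lx Tl Λ
      (∫ u in (0:ℝ)..Lx, F u) (F y) := hc
  have hF0 : F 0 = 0 := by rw [hF, intervalIntegral.integral_same]
  have hFx : 0 < F x := by
    have hfx : ContinuousOn f (uIcc 0 x) := by
      rw [uIcc_of_le hx0.le]
      exact hf.mono (Icc_subset_Icc_right hxL)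
    rw [hF]
    exact intervalIntegral.intervalIntegral_pos_of_pos_on hfx.intervalIntegrable
      (fun t ht => hfpos' t ⟨ht.1, ht.2.le.trans hxL⟩) hx0
  rw [hcF, hcF, hF0]
  exact routeCost_zero_lt _ _ _ _ _ hγt hd hH hVd hcond hFx

/-- Strict version of Result 1(a): under a strict cost inequality and strictly
positive demand density, x_f = 0 is the unique minimizer. -/
theorem fixed_route_unique_optimal
    (γt γa γw γo γv ta d H Vd Lx Tl : ℝ)
    (hγt : 0 < γt) (hγa : 0 < γa) (hγw : 0 < γw) (hγo : 0 < γo) (hγv : 0 < γv)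
    (hta : 0 < ta) (hd : 0 < d) (hH : 0 < H) (hVd : 0 < Vd) (hLx : 0 < Lx)
    (hTl : 0 ≤ Tl)
    (f : ℝ → ℝ) (hf : ContinuousOn f (Set.Icc 0 Lx))
    (hfpos : ∀ x ∈ Set.Icc (0:ℝ) Lx, 0 ≤ f x)
    (F : ℝ → ℝ) (hF : ∀ x, F x = ∫ t in (0:ℝ)..x, f t)
    (Λ : ℝ) (hΛ : Λ = F Lx)
    (c : ℝ → ℝ)
    (hc : ∀ x, c x =
      γt * γa * ta * (Λ - F x) + γt * γw * Λ * H / 2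
      + (γt / Vd) * (∫ u in (0:ℝ)..Lx, F u)
      + γt * H * d * (F x) ^ 2 / (2 * Vd)
      + γo * Lx / H + γo * d * F x
      + (2 * γv / H) * (Lx / Vd + H * d * F x / Vd + Tl))
    (hcond : γt * γa * ta < γo * d + 2 * γv * d / Vd)
    (hfpos' : ∀ x ∈ Set.Ioc (0:ℝ) Lx, 0 < f x) :
    ∀ x ∈ Set.Ioc (0:ℝ) Lx, c 0 < c x :=
  fixed_route_unique_optimal_general γt γa γw γo γv ta d H Vd Lx Tl hγt hd hH hVd f hf F hF Λ c hc
    hcond hfpos'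
end

section
/- Suppose γ_t·γ_a·t̄_a ≥ γ_t·H·Λ·d̄/V_d + γ_o·d̄ + 2·γ_v·d̄/V_d. Then the total cost function c attains its minimum over [0, L_x] at x_f = L_x, i.e., c(L_x) ≤ c(x) for all x ∈ [0, L_x] (the fully flexible route is optimal). -/
open Set

theorem intervalIntegral_le_of_nonneg_of_mem_Icc {f : ℝ → ℝ} {a b x : ℝ}
    (hf : ContinuousOn f (Icc a b)) (hpos : ∀ t ∈ Icc a b, 0 ≤ f t) (hx : x ∈ Icc a b) :
    ∫ t in a..x, f t ≤ ∫ t in a..b, f t := by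
  have hab : a ≤ b := hx.1.trans hx.2
  refine intervalIntegral.integral_mono_interval le_rfl hx.1 hx.2 ?_
    (hf.intervalIntegrable_of_Icc hab)
  exact MeasureTheory.ae_restrict_of_forall_mem measurableSet_Ioc
    fun t ht => hpos t (Ioc_subset_Icc_self ht)

theorem quadratic_le_of_le_of_slope_nonpos {a b s Λ : ℝ} (hb : 0 ≤ b) (hs : s ≤ Λ)
    (hslope : a + 2 * b * Λ ≤ 0) :
    a * Λ + b * Λ ^ 2 ≤ a * s + b * s ^ 2 := by
  have hfactor : a * s + b * s ^ 2 - (a * Λ + b * Λ ^ 2)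
      = (Λ - s) * (-(a + 2 * b * Λ) + b * (Λ - s)) := by ring
  have hnonneg : 0 ≤ (Λ - s) * (-(a + 2 * b * Λ) + b * (Λ - s)) :=
    mul_nonneg (sub_nonneg.2 hs) (by nlinarith [mul_nonneg hb (sub_nonneg.2 hs)])
  linarith

theorem flexible_route_optimal_general
    (γt γa γw γo γv ta d H Vd Lx Tl : ℝ)
    (hγt : 0 < γt) (hd : 0 < d) (hH : 0 < H) (hVd : 0 < Vd)
    (f : ℝ → ℝ) (hf : ContinuousOn f (Set.Icc 0 Lx))
    (hfpos : ∀ x ∈ Set.Icc (0:ℝ) Lx, 0 ≤ f x)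
    (F : ℝ → ℝ) (hF : ∀ x, F x = ∫ t in (0:ℝ)..x, f t)
    (Λ : ℝ) (hΛ : Λ = F Lx)
    (c : ℝ → ℝ)
    (hc : ∀ x, c x =
      γt * γa * ta * (Λ - F x) + γt * γw * Λ * H / 2
      + (γt / Vd) * (∫ u in (0:ℝ)..Lx, F u)
      + γt * H * d * (F x) ^ 2 / (2 * Vd)
      + γo * Lx / H + γo * d * F x
      + (2 * γv / H) * (Lx / Vd + H * d * F x / Vd + Tl))
    (hcond : γt * H * Λ * d / Vd + γo * d + 2 * γv * d / Vd ≤ γt * γa * ta) :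
    ∀ x ∈ Set.Icc (0:ℝ) Lx, c Lx ≤ c x := by
  intro x hx
  -- As a function of the demand `F x` served by the flexible segment, `c` is a convex quadratic.
  set a := -(γt * γa * ta) + γo * d + 2 * γv * d / Vd
  set b := γt * H * d / (2 * Vd)
  have hcost : c x - c Lx = (a * F x + b * F x ^ 2) - (a * Λ + b * Λ ^ 2) := by
    rw [hc x, hc Lx, ← hΛ]
    simp only [a, b]
    field_simp
    ring
  have hslope : a + 2 * b * Λ ≤ 0 := by
    have : 2 * b * Λ = γt * H * Λ * d / Vd := by simp only [b]; field_simp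
    linarith
  have hserved : F x ≤ Λ := by
    rw [hF, hΛ, hF]
    exact intervalIntegral_le_of_nonneg_of_mem_Icc hf hfpos hx
  have hdecrease := quadratic_le_of_le_of_slope_nonpos (by positivity) hserved hslope
  linarith

/-- Result 1(b): if the access-cost saving per detour is at least the extra
riding, operating, and vehicle cost, the fully flexible route (x_f = L_x)
minimizes total cost. -/
theorem flexible_route_optimal
    (γt γa γw γo γv ta d H Vd Lx Tl : ℝ)
    (hγt : 0 < γt) (hγa : 0 < γa) (hγw : 0 < γw) (hγo : 0 < γo) (hγv : 0 < γv)
    (hta : 0 < ta) (hd : 0 < d) (hH : 0 < H) (hVd : 0 < Vd) (hLx : 0 < Lx)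
    (hTl : 0 ≤ Tl)
    (f : ℝ → ℝ) (hf : ContinuousOn f (Set.Icc 0 Lx))
    (hfpos : ∀ x ∈ Set.Icc (0:ℝ) Lx, 0 ≤ f x)
    (F : ℝ → ℝ) (hF : ∀ x, F x = ∫ t in (0:ℝ)..x, f t)
    (Λ : ℝ) (hΛ : Λ = F Lx)
    (c : ℝ → ℝ)
    (hc : ∀ x, c x =
      γt * γa * ta * (Λ - F x) + γt * γw * Λ * H / 2
      + (γt / Vd) * (∫ u in (0:ℝ)..Lx, F u)
      + γt * H * d * (F x) ^ 2 / (2 * Vd)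
      + γo * Lx / H + γo * d * F x
      + (2 * γv / H) * (Lx / Vd + H * d * F x / Vd + Tl))
    (hcond : γt * H * Λ * d / Vd + γo * d + 2 * γv * d / Vd ≤ γt * γa * ta) :
    ∀ x ∈ Set.Icc (0:ℝ) Lx, c Lx ≤ c x :=
  flexible_route_optimal_general γt γa γw γo γv ta d H Vd Lx Tl hγt hd hH hVd f hf hfpos F hF Λ hΛ c
    hc hcond
end

section
/- Suppose γ_t·γ_a·t̄_a > γ_t·H·Λ·d̄/V_d + γ_o·d̄ + 2·γ_v·d̄/V_d and f(x) > 0 for all x ∈ [0, L_x). Then c(L_x) < c(x) for every x ∈ [0, L_x), so x_f = L_x is the unique minimizer of c on [0, L_x]. -/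
/-- Strict version of Result 1(b): under a strict cost inequality and strictly
positive demand density, x_f = L_x is the unique minimizer. -/
theorem flexible_route_unique_optimal
    (γt γa γw γo γv ta d H Vd Lx Tl : ℝ)
    (hγt : 0 < γt) (hγa : 0 < γa) (hγw : 0 < γw) (hγo : 0 < γo) (hγv : 0 < γv)
    (hta : 0 < ta) (hd : 0 < d) (hH : 0 < H) (hVd : 0 < Vd) (hLx : 0 < Lx)
    (hTl : 0 ≤ Tl)
    (f : ℝ → ℝ) (hf : ContinuousOn f (Set.Icc 0 Lx))
    (hfpos : ∀ x ∈ Set.Icc (0:ℝ) Lx, 0 ≤ f x)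
    (F : ℝ → ℝ) (hF : ∀ x, F x = ∫ t in (0:ℝ)..x, f t)
    (Λ : ℝ) (hΛ : Λ = F Lx)
    (c : ℝ → ℝ)
    (hc : ∀ x, c x =
      γt * γa * ta * (Λ - F x) + γt * γw * Λ * H / 2
      + (γt / Vd) * (∫ u in (0:ℝ)..Lx, F u)
      + γt * H * d * (F x) ^ 2 / (2 * Vd)
      + γo * Lx / H + γo * d * F x
      + (2 * γv / H) * (Lx / Vd + H * d * F x / Vd + Tl))
    (hcond : γt * H * Λ * d / Vd + γo * d + 2 * γv * d / Vd < γt * γa * ta)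
    (hfpos' : ∀ x ∈ Set.Ico (0:ℝ) Lx, 0 < f x) :
    ∀ x ∈ Set.Ico (0:ℝ) Lx, c Lx < c x := by
  intro x hx
  obtain ⟨hx0, hxL⟩ := hx
  have hi1 : IntervalIntegrable f MeasureTheory.volume 0 x := by
    apply ContinuousOn.intervalIntegrable
    apply hf.mono
    rw [Set.uIcc_of_le hx0]
    exact Set.Icc_subset_Icc le_rfl hxL.le
  have hi2 : IntervalIntegrable f MeasureTheory.volume x Lx := by
    apply ContinuousOn.intervalIntegrable
    apply hf.mono
    rw [Set.uIcc_of_le hxL.le]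
    exact Set.Icc_subset_Icc hx0 le_rfl
  have hsplit : F x + (∫ t in x..Lx, f t) = F Lx := by
    rw [hF, hF]
    exact intervalIntegral.integral_add_adjacent_intervals hi1 hi2
  have hpos : 0 < ∫ t in x..Lx, f t := by
    apply intervalIntegral.intervalIntegral_pos_of_pos_on hi2 _ hxL
    intro t ht
    exact hfpos' t ⟨le_of_lt (lt_of_le_of_lt hx0 ht.1), ht.2⟩
  have hACΛ : F x < Λ := by rw [hΛ]; linarith
  rw [hc x, hc Lx, ← hΛ]
  have h1 : 0 < Λ - F x := by linarith
  set A := F x with hA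
  have e1 : 2*γv/H*(Lx/Vd + H*d*Λ/Vd + Tl)
      = 2*γv/H*(Lx/Vd + H*d*A/Vd + Tl) + 2*γv*d/Vd*(Λ-A) := by
    field_simp
    ring
  have e2 : γt*H*d*Λ^2/(2*Vd) = γt*H*d*A^2/(2*Vd) + γt*H*d*(Λ^2-A^2)/(2*Vd) := by
    ring
  have e3 : γt*H*d*(Λ^2-A^2)/(2*Vd) ≤ γt*H*Λ*d/Vd*(Λ-A) := by
    have hnum : γt*H*d*(Λ^2-A^2) ≤ γt*H*d*(2*Λ*(Λ-A)) := by
      have h2 : Λ^2 - A^2 ≤ 2*Λ*(Λ-A) := by nlinarith [sq_nonneg (Λ-A)]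
      have h3 : 0 ≤ γt*H*d := by positivity
      nlinarith [mul_le_mul_of_nonneg_left h2 h3]
    calc γt*H*d*(Λ^2-A^2)/(2*Vd) ≤ γt*H*d*(2*Λ*(Λ-A))/(2*Vd) := by gcongr
      _ = γt*H*Λ*d/Vd*(Λ-A) := by field_simp
  have key := mul_lt_mul_of_pos_right hcond h1
  have e4 : γo*d*Λ = γo*d*A + γo*d*(Λ-A) := by ring
  linarith [key, e1, e2, e3, e4]
end

section
/- Suppose γ_o·d̄ + 2·γ_v·d̄/V_d < γ_t·γ_a·t̄_a < γ_t·H·Λ·d̄/V_d + γ_o·d̄ + 2·γ_v·d̄/V_d (the hybrid route condition). Let F* = (1/H)·(γ_a·V_d·t̄_a/d̄ − (γ_o/γ_t)·V_d − 2·γ_v/γ_t). Then 0 < F* < Λ, and any x* ∈ [0, L_x] with F(x*) = F* satisfies c(x*) ≤ c(x) for all x ∈ [0, L_x]; in particular such an x* exists and every such x* lies in (0, L_x). -/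
/-- Result 1(c): under the hybrid route condition, the optimal cumulative
demand threshold F* lies strictly between 0 and Λ, any point x* with
F(x*) = F* is a global minimizer of the total cost on [0, L_x], such an x*
exists, and every such x* lies strictly inside (0, L_x). -/
theorem hybrid_route_optimal
    (γt γa γw γo γv ta d H Vd Lx Tl : ℝ)
    (hγt : 0 < γt) (hγa : 0 < γa) (hγw : 0 < γw) (hγo : 0 < γo) (hγv : 0 < γv)
    (hta : 0 < ta) (hd : 0 < d) (hH : 0 < H) (hVd : 0 < Vd) (hLx : 0 < Lx)
    (hTl : 0 ≤ Tl)
    (f : ℝ → ℝ) (hf : ContinuousOn f (Set.Icc 0 Lx))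
    (hfpos : ∀ x ∈ Set.Icc (0:ℝ) Lx, 0 ≤ f x)
    (F : ℝ → ℝ) (hF : ∀ x, F x = ∫ t in (0:ℝ)..x, f t)
    (Λ : ℝ) (hΛ : Λ = F Lx)
    (c : ℝ → ℝ)
    (hc : ∀ x, c x =
      γt * γa * ta * (Λ - F x) + γt * γw * Λ * H / 2
      + (γt / Vd) * (∫ u in (0:ℝ)..Lx, F u)
      + γt * H * d * (F x) ^ 2 / (2 * Vd)
      + γo * Lx / H + γo * d * F x
      + (2 * γv / H) * (Lx / Vd + H * d * F x / Vd + Tl))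
    (hcond₁ : γo * d + 2 * γv * d / Vd < γt * γa * ta)
    (hcond₂ : γt * γa * ta < γt * H * Λ * d / Vd + γo * d + 2 * γv * d / Vd)
    (Fstar : ℝ)
    (hFstar : Fstar = (1 / H) * (γa * Vd * ta / d - (γo / γt) * Vd - 2 * γv / γt)) :
    (0 < Fstar ∧ Fstar < Λ)
    ∧ (∀ xs ∈ Set.Icc (0:ℝ) Lx, F xs = Fstar → ∀ x ∈ Set.Icc (0:ℝ) Lx, c xs ≤ c x)
    ∧ (∃ xs ∈ Set.Icc (0:ℝ) Lx, F xs = Fstar)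
    ∧ (∀ xs ∈ Set.Icc (0:ℝ) Lx, F xs = Fstar → xs ∈ Set.Ioo (0:ℝ) Lx) := by
  have hVd' : (Vd:ℝ) ≠ 0 := ne_of_gt hVd
  have hkey : γt * H * d * Fstar = (γt * γa * ta - γo * d - 2 * γv * d / Vd) * Vd := by
    rw [hFstar]; field_simp
  have e1 : (2 * γv * d / Vd) * Vd = 2 * γv * d := div_mul_cancel₀ _ hVd'
  have e2 : (γt * H * Λ * d / Vd) * Vd = γt * H * Λ * d := div_mul_cancel₀ _ hVd'
  have hK : 0 < γt * H * d := by positivity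
  have hbounds : 0 < Fstar ∧ Fstar < Λ := by
    have hc1' := mul_lt_mul_of_pos_right hcond₁ hVd
    have hc2' := mul_lt_mul_of_pos_right hcond₂ hVd
    constructor
    · have h1 : 0 < γt * H * d * Fstar := by nlinarith [hkey, hc1', e1]
      nlinarith [h1, hK]
    · have h2 : γt * H * d * Fstar < γt * H * d * Λ := by nlinarith [hkey, hc2', e1, e2]
      exact lt_of_mul_lt_mul_left h2 hK.le
  have hF0 : F 0 = 0 := by rw [hF]; simp
  have hmin : ∀ xs ∈ Set.Icc (0:ℝ) Lx, F xs = Fstar → ∀ x ∈ Set.Icc (0:ℝ) Lx, c xs ≤ c x := by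
    intro xs hxs hFxs x hx
    have hkey2 : γt * H * d * Fstar = γt * γa * ta * Vd - γo * d * Vd - 2 * γv * d := by
      rw [hFstar]; field_simp
    have hH' : (H:ℝ) ≠ 0 := ne_of_gt hH
    have hc' : ∀ y : ℝ, c y * (2 * Vd * H) =
        2 * Vd * H * (γt * γa * ta) * (Λ - F y) + γt * γw * Λ * H ^ 2 * Vd
        + 2 * γt * H * (∫ u in (0:ℝ)..Lx, F u) + γt * H ^ 2 * d * (F y) ^ 2
        + 2 * γo * Lx * Vd + 2 * γo * d * F y * Vd * H
        + 4 * γv * (Lx + H * d * F y + Tl * Vd) := by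
      intro y; rw [hc]; field_simp; ring
    have hdiff : (c x - c xs) * (2 * Vd * H) = γt * H ^ 2 * d * (F x - Fstar) ^ 2 := by
      have h1 := hc' x
      have h2 := hc' xs
      rw [hFxs] at h2
      linear_combination h1 - h2 + 2 * H * (F x - Fstar) * hkey2
    have hpos : (0:ℝ) < 2 * Vd * H := by positivity
    have hsq : (0:ℝ) ≤ γt * H ^ 2 * d * (F x - Fstar) ^ 2 := by positivity
    have h3 : 0 * (2 * Vd * H) ≤ (c x - c xs) * (2 * Vd * H) := by
      rw [hdiff]; simpa using hsq
    have h4 : (0:ℝ) ≤ c x - c xs := le_of_mul_le_mul_right h3 hpos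
    linarith
  refine ⟨hbounds, hmin, ?_, ?_⟩
  · have hint : MeasureTheory.IntegrableOn f (Set.uIcc 0 Lx) := by
      rw [Set.uIcc_of_le hLx.le]
      exact hf.integrableOn_Icc
    have hcont : ContinuousOn (fun x => ∫ t in (0:ℝ)..x, f t) (Set.uIcc 0 Lx) :=
      intervalIntegral.continuousOn_primitive_interval hint
    have hFc : ContinuousOn F (Set.Icc 0 Lx) := by
      rw [← Set.uIcc_of_le hLx.le]
      exact hcont.congr (fun x _ => hF x)
    have hivt := intermediate_value_Icc hLx.le hFc
    have hmem : Fstar ∈ Set.Icc (F 0) (F Lx) := by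
      rw [hF0, ← hΛ]
      exact ⟨hbounds.1.le, hbounds.2.le⟩
    obtain ⟨xs, hxs, hxse⟩ := hivt hmem
    exact ⟨xs, hxs, hxse⟩
  · intro xs hxs hFxs
    have h0 : xs ≠ 0 := by
      intro h; rw [h, hF0] at hFxs; exact absurd hFxs.symm (ne_of_gt hbounds.1)
    have hL : xs ≠ Lx := by
      intro h; rw [h, ← hΛ] at hFxs; exact absurd hFxs (ne_of_gt hbounds.2)
    exact ⟨lt_of_le_of_ne hxs.1 (Ne.symm h0), lt_of_le_of_ne hxs.2 hL⟩
end

section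
/- Let F* = (1/H)·(γ_a·V_d·t̄_a/d̄ − (γ_o/γ_t)·V_d − 2·γ_v/γ_t) and let x ∈ (0, L_x) with f(x) > 0. Then the derivative of the total cost function satisfies: c'(x) < 0 if and only if F(x) < F*, c'(x) = 0 if and only if F(x) = F*, and c'(x) > 0 if and only if F(x) > F*. -/
/-- Sign of the cost derivative relative to the threshold F* (Eq. (13)). -/
theorem total_cost_deriv_sign
    (γt γa γw γo γv ta d H Vd Lx Tl : ℝ)
    (hγt : 0 < γt) (hγa : 0 < γa) (hγw : 0 < γw) (hγo : 0 < γo) (hγv : 0 < γv)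
    (hta : 0 < ta) (hd : 0 < d) (hH : 0 < H) (hVd : 0 < Vd) (hLx : 0 < Lx)
    (hTl : 0 ≤ Tl)
    (f : ℝ → ℝ) (hf : ContinuousOn f (Set.Icc 0 Lx))
    (hfpos : ∀ x ∈ Set.Icc (0:ℝ) Lx, 0 ≤ f x)
    (F : ℝ → ℝ) (hF : ∀ x, F x = ∫ t in (0:ℝ)..x, f t)
    (Λ : ℝ) (hΛ : Λ = F Lx)
    (c : ℝ → ℝ)
    (hc : ∀ x, c x =
      γt * γa * ta * (Λ - F x) + γt * γw * Λ * H / 2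
      + (γt / Vd) * (∫ u in (0:ℝ)..Lx, F u)
      + γt * H * d * (F x) ^ 2 / (2 * Vd)
      + γo * Lx / H + γo * d * F x
      + (2 * γv / H) * (Lx / Vd + H * d * F x / Vd + Tl))
    (Fstar : ℝ)
    (hFstar : Fstar = (1 / H) * (γa * Vd * ta / d - (γo / γt) * Vd - 2 * γv / γt))
    (x : ℝ) (hx : x ∈ Set.Ioo (0:ℝ) Lx) (hfx : 0 < f x) :
    (deriv c x < 0 ↔ F x < Fstar)
    ∧ (deriv c x = 0 ↔ F x = Fstar)
    ∧ (0 < deriv c x ↔ Fstar < F x) := by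
  obtain ⟨hx0, hxL⟩ := hx
  -- F has derivative f x at x
  have hmem : Set.Icc (0:ℝ) Lx ∈ nhds x :=
    Icc_mem_nhds hx0 hxL
  have hca : ContinuousAt f x := hf.continuousAt hmem
  have hsm : StronglyMeasurableAtFilter f (nhds x) :=
    ⟨Set.Icc 0 Lx, hmem, (hf.aemeasurable measurableSet_Icc).aestronglyMeasurable⟩
  have hint : IntervalIntegrable f MeasureTheory.volume 0 x := by
    apply ContinuousOn.intervalIntegrable
    apply hf.mono
    rw [Set.uIcc_of_le hx0.le]
    exact Set.Icc_subset_Icc le_rfl hxL.le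
  have hFeq : F = fun y => ∫ t in (0:ℝ)..y, f t := funext hF
  have hFd : HasDerivAt F (f x) x := by
    rw [hFeq]
    exact intervalIntegral.integral_hasDerivAt_right hint hsm hca
  -- derivative of c
  have hceq : c = fun y =>
      γt * γa * ta * (Λ - F y) + γt * γw * Λ * H / 2
      + (γt / Vd) * (∫ u in (0:ℝ)..Lx, F u)
      + γt * H * d * (F y) ^ 2 / (2 * Vd)
      + γo * Lx / H + γo * d * F y
      + (2 * γv / H) * (Lx / Vd + H * d * F y / Vd + Tl) := funext hc
  set D : ℝ := γt * H * d / Vd * f x * (F x - Fstar) with hD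
  have hcd : HasDerivAt c D x := by
    rw [hceq]
    have h1 : HasDerivAt (fun y => γt * γa * ta * (Λ - F y))
        (γt * γa * ta * (0 - f x)) x := ((hasDerivAt_const x Λ).sub hFd).const_mul _
    have h2 : HasDerivAt (fun y => γt * H * d * (F y) ^ 2 / (2 * Vd))
        (γt * H * d * (2 * F x ^ 1 * f x) / (2 * Vd)) x :=
      ((hFd.pow 2).const_mul _).div_const _
    have h3 : HasDerivAt (fun y => γo * d * F y) (γo * d * f x) x := hFd.const_mul _
    have h4 : HasDerivAt (fun y => (2 * γv / H) * (Lx / Vd + H * d * F y / Vd + Tl))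
        ((2 * γv / H) * (H * d * f x / Vd)) x :=
      ((((hFd.const_mul (H * d)).div_const Vd).const_add (Lx / Vd)).add_const
        Tl).const_mul _
    have hsum := (((((h1.add_const (γt * γw * Λ * H / 2)).add_const
        ((γt / Vd) * (∫ u in (0:ℝ)..Lx, F u))).add h2).add_const
        (γo * Lx / H)).add h3).add h4
    refine hsum.congr_deriv ?_
    rw [hD, hFstar]
    field_simp
    ring
  have hderiv : deriv c x = D := hcd.deriv
  have hK : 0 < γt * H * d / Vd * f x := by positivity
  rw [hderiv, hD]
  refine ⟨⟨fun h => ?_, fun h => ?_⟩, ⟨fun h => ?_, fun h => ?_⟩, ⟨fun h => ?_, fun h => ?_⟩⟩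
  · nlinarith
  · nlinarith
  · nlinarith [mul_eq_zero.mp h]
  · rw [h]; ring
  · nlinarith
  · nlinarith
end

section
/- Suppose f is continuously differentiable on a neighborhood of x* ∈ (0, L_x) and F(x*) = F*, where F* = (1/H)·(γ_a·V_d·t̄_a/d̄ − (γ_o/γ_t)·V_d − 2·γ_v/γ_t). Then the second derivative of the total cost function at x* equals c''(x*) = γ_t·H·(d̄/V_d)·f(x*)², which is nonnegative. -/
/-- Eq. (16): at an interior point x* with F(x*) = F* where f is C¹ on a
neighborhood, the second derivative of the total cost equals
γ_t·H·(d̄/V_d)·f(x*)², which is nonnegative. -/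
theorem total_cost_second_deriv_at_opt
    (γt γa γw γo γv ta d H Vd Lx Tl : ℝ)
    (hγt : 0 < γt) (hγa : 0 < γa) (hγw : 0 < γw) (hγo : 0 < γo) (hγv : 0 < γv)
    (hta : 0 < ta) (hd : 0 < d) (hH : 0 < H) (hVd : 0 < Vd) (hLx : 0 < Lx)
    (hTl : 0 ≤ Tl)
    (f : ℝ → ℝ) (hf : ContinuousOn f (Set.Icc 0 Lx))
    (hfpos : ∀ x ∈ Set.Icc (0:ℝ) Lx, 0 ≤ f x)
    (F : ℝ → ℝ) (hF : ∀ x, F x = ∫ t in (0:ℝ)..x, f t)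
    (Λ : ℝ) (hΛ : Λ = F Lx)
    (c : ℝ → ℝ)
    (hc : ∀ x, c x =
      γt * γa * ta * (Λ - F x) + γt * γw * Λ * H / 2
      + (γt / Vd) * (∫ u in (0:ℝ)..Lx, F u)
      + γt * H * d * (F x) ^ 2 / (2 * Vd)
      + γo * Lx / H + γo * d * F x
      + (2 * γv / H) * (Lx / Vd + H * d * F x / Vd + Tl))
    (Fstar : ℝ)
    (hFstar : Fstar = (1 / H) * (γa * Vd * ta / d - (γo / γt) * Vd - 2 * γv / γt))
    (xs : ℝ) (hxs : xs ∈ Set.Ioo (0:ℝ) Lx)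
    (U : Set ℝ) (hU : U ∈ nhds xs) (hfC1 : ContDiffOn ℝ 1 f U)
    (hFxs : F xs = Fstar) :
    deriv (deriv c) xs = γt * H * (d / Vd) * (f xs) ^ 2
    ∧ 0 ≤ γt * H * (d / Vd) * (f xs) ^ 2 := by
  have hHne : H ≠ 0 := hH.ne'
  have hVne : Vd ≠ 0 := hVd.ne'
  have hγtne : γt ≠ 0 := hγt.ne'
  have hdne : d ≠ 0 := hd.ne'
  -- the open neighborhood
  set V : Set ℝ := interior U ∩ Set.Ioo 0 Lx with hVdef
  have hVopen : IsOpen V := isOpen_interior.inter isOpen_Ioo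
  have hxsV : xs ∈ V := ⟨mem_interior_iff_mem_nhds.mpr hU, hxs⟩
  have hcontV : ∀ y ∈ V, ContinuousAt f y := by
    intro y hy
    exact (hfC1.contDiffAt (mem_interior_iff_mem_nhds.mp hy.1)).continuousAt
  -- F has derivative f on V
  have hFderiv : ∀ y ∈ V, HasDerivAt F (f y) y := by
    intro y hy
    have hy2 : y ∈ Set.Ioo 0 Lx := hy.2
    have hint : IntervalIntegrable f MeasureTheory.volume 0 y := by
      apply ContinuousOn.intervalIntegrable
      apply hf.mono
      rw [Set.uIcc_of_le hy2.1.le]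
      exact Set.Icc_subset_Icc_right hy2.2.le
    have hmeas : StronglyMeasurableAtFilter f (nhds y) := by
      exact ContinuousAt.stronglyMeasurableAtFilter hVopen hcontV y hy
    have hFD := intervalIntegral.integral_hasDerivAt_right hint hmeas (hcontV y hy)
    have hFeq : F = fun u => ∫ t in (0:ℝ)..u, f t := funext hF
    rw [hFeq]
    exact hFD
  -- g is the first derivative of c on V
  have hcd : ∀ y ∈ V, HasDerivAt c
      ((γo * d + 2 * γv * d / Vd - γt * γa * ta) * f y
        + (γt * H * d / Vd) * (F y * f y)) y := by
    intro y hy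
    have hFd := hFderiv y hy
    have hcfun : c = fun x => γt * γa * ta * (Λ - F x) + γt * γw * Λ * H / 2
        + (γt / Vd) * (∫ u in (0:ℝ)..Lx, F u)
        + γt * H * d * (F x) ^ 2 / (2 * Vd)
        + γo * Lx / H + γo * d * F x
        + (2 * γv / H) * (Lx / Vd + H * d * F x / Vd + Tl) := funext hc
    rw [hcfun]
    have h :=
      ((((((((hasDerivAt_const y Λ).sub hFd).const_mul (γt * γa * ta)).add
        (hasDerivAt_const y (γt * γw * Λ * H / 2))).add
        (hasDerivAt_const y ((γt / Vd) * ∫ u in (0:ℝ)..Lx, F u))).add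
        (((hFd.pow 2).const_mul (γt * H * d)).div_const (2 * Vd))).add
        (hasDerivAt_const y (γo * Lx / H))).add
        (hFd.const_mul (γo * d))).add
        ((((hasDerivAt_const y (Lx / Vd)).add
          ((hFd.const_mul (H * d)).div_const Vd)).add
          (hasDerivAt_const y Tl)).const_mul (2 * γv / H))
    convert h using 1
    · rfl
    · rfl
    · rfl
    field_simp
    push_cast
    ring
  have hg : deriv c =ᶠ[nhds xs] fun y =>
      (γo * d + 2 * γv * d / Vd - γt * γa * ta) * f y
        + (γt * H * d / Vd) * (F y * f y) := by
    filter_upwards [hVopen.mem_nhds hxsV] with y hy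
    exact (hcd y hy).deriv
  have hfd : HasDerivAt f (deriv f xs) xs :=
    ((hfC1.contDiffAt hU).differentiableAt one_ne_zero).hasDerivAt
  have hFdxs := hFderiv xs hxsV
  have hgd : HasDerivAt (fun y =>
      (γo * d + 2 * γv * d / Vd - γt * γa * ta) * f y
        + (γt * H * d / Vd) * (F y * f y))
      ((γo * d + 2 * γv * d / Vd - γt * γa * ta) * deriv f xs
        + (γt * H * d / Vd) * (f xs * f xs + F xs * deriv f xs)) xs :=
    (hfd.const_mul _).add ((hFdxs.mul hfd).const_mul _)
  constructor
  · rw [hg.deriv_eq, hgd.deriv, hFxs, hFstar]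
    field_simp
    ring
  · positivity
end

section
/- Define the fleet size function s(x) = (2/H)·(L_x/V_d + H·(d̄/V_d)·F(x) + T_l). If x* satisfies F(x*) = (1/H)·(γ_a·V_d·t̄_a/d̄ − (γ_o/γ_t)·V_d − 2·γ_v/γ_t), then the optimal fleet size equals s(x*) = (2/H)·(L_x/V_d + γ_a·t̄_a − (γ_o/γ_t)·d̄ − 2·(γ_v/γ_t)·(d̄/V_d) + T_l); in particular this value is independent of the demand density f. -/
theorem optimal_fleet_size_general
    (γt γa γo γv ta d H Vd Lx Tl : ℝ)
    (hd : 0 < d) (hH : 0 < H) (hVd : 0 < Vd)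
    (F : ℝ → ℝ)
    (s : ℝ → ℝ)
    (hs : ∀ x, s x = (2 / H) * (Lx / Vd + H * (d / Vd) * F x + Tl))
    (xs : ℝ)
    (hxs : F xs = (1 / H) * (γa * Vd * ta / d - (γo / γt) * Vd - 2 * γv / γt)) :
    s xs = (2 / H) * (Lx / Vd + γa * ta - (γo / γt) * d
      - 2 * (γv / γt) * (d / Vd) + Tl) := by
  have detour_demand : H * (d / Vd) * F xs
      = γa * ta - (γo / γt) * d - 2 * (γv / γt) * (d / Vd) := by
    rw [hxs]
    field_simp
  rw [hs, detour_demand]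
  ring

/-- Result 2 (Eq. (17)): the optimal fleet size, expressed independently of the
x-directional demand distribution. -/
theorem optimal_fleet_size
    (γt γa γo γv ta d H Vd Lx Tl : ℝ)
    (hγt : 0 < γt) (hγa : 0 < γa) (hγo : 0 < γo) (hγv : 0 < γv)
    (hta : 0 < ta) (hd : 0 < d) (hH : 0 < H) (hVd : 0 < Vd) (hLx : 0 < Lx)
    (hTl : 0 ≤ Tl)
    (f : ℝ → ℝ) (hf : ContinuousOn f (Set.Icc 0 Lx))
    (hfpos : ∀ x ∈ Set.Icc (0:ℝ) Lx, 0 ≤ f x)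
    (F : ℝ → ℝ) (hF : ∀ x, F x = ∫ t in (0:ℝ)..x, f t)
    (s : ℝ → ℝ)
    (hs : ∀ x, s x = (2 / H) * (Lx / Vd + H * (d / Vd) * F x + Tl))
    (xs : ℝ)
    (hxs : F xs = (1 / H) * (γa * Vd * ta / d - (γo / γt) * Vd - 2 * γv / γt)) :
    s xs = (2 / H) * (Lx / Vd + γa * ta - (γo / γt) * d
      - 2 * (γv / γt) * (d / Vd) + Tl) :=
  optimal_fleet_size_general γt γa γo γv ta d H Vd Lx Tl hd hH hVd F s hs xs hxs
end

section
/- Under uniform demand with density f(x) = λ for a constant λ > 0 (so F(x) = λ·x), let x*_uni = (1/(λ·H))·(γ_a·V_d·t̄_a/d̄ − (γ_o/γ_t)·V_d − 2·γ_v/γ_t). If 0 ≤ x*_uni ≤ L_x, then the total cost function c attains its minimum over [0, L_x] at x*_uni, i.e., c(x*_uni) ≤ c(x) for all x ∈ [0, L_x]. -/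
/-! The total cost is a convex quadratic in `x` (the only quadratic term is the detour
time `γ_t (λ²/2) H (d̄/V_d) x²`), and `x*_uni` is the zero of its derivative, so it is the
global minimiser on `ℝ`, a fortiori on `[0, L_x]`. -/

theorem quadratic_le_of_two_mul_add_eq_zero {a b x₀ : ℝ} (ha : 0 ≤ a)
    (hx₀ : 2 * a * x₀ + b = 0) (x : ℝ) :
    a * x₀ ^ 2 + b * x₀ ≤ a * x ^ 2 + b * x := by
  have hsq : a * x ^ 2 + b * x - (a * x₀ ^ 2 + b * x₀)
      = a * (x - x₀) ^ 2 + (2 * a * x₀ + b) * (x - x₀) := by ring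
  rw [hx₀, zero_mul, add_zero] at hsq
  linarith [mul_nonneg ha (sq_nonneg (x - x₀))]

theorem uniform_demand_optimal_flexible_portion_general
    (γt γa γw γo γv ta d H Vd Lx Tl lam : ℝ)
    (hγt : 0 < γt)
    (hd : 0 < d) (hH : 0 < H) (hVd : 0 < Vd)
    (hlam : 0 < lam)
    (c : ℝ → ℝ)
    (hc : ∀ x, c x =
      γt * γa * ta * lam * (Lx - x) + γt * γw * lam * Lx * H / 2
      + γt * lam * Lx ^ 2 / (2 * Vd)
      + γt * (lam ^ 2 / 2) * H * (d / Vd) * x ^ 2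
      + γo * Lx / H + γo * lam * d * x
      + (2 * γv / H) * (Lx / Vd + H * (d / Vd) * lam * x + Tl))
    (xuni : ℝ)
    (hxuni : xuni = (1 / (lam * H)) * (γa * Vd * ta / d - (γo / γt) * Vd - 2 * γv / γt)) :
    ∀ x ∈ Set.Icc (0:ℝ) Lx, c xuni ≤ c x := by
  intro x _
  set a := γt * (lam ^ 2 / 2) * H * (d / Vd)
  set b := -(γt * γa * ta * lam) + γo * lam * d + 2 * γv * (d / Vd) * lam
  have hc_quadratic : ∀ y, c y = c 0 + (a * y ^ 2 + b * y) := by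
    intro y
    rw [hc y, hc 0]
    simp only [a, b]
    field_simp
    ring
  have hvertex : 2 * a * xuni + b = 0 := by
    rw [hxuni]
    simp only [a, b]
    field_simp
    ring
  have ha : 0 ≤ a := by positivity
  rw [hc_quadratic xuni, hc_quadratic x]
  linarith [quadratic_le_of_two_mul_add_eq_zero ha hvertex x]

/-- Eq. (18): under uniform demand, the flexible route portion x*_uni minimizes
the total cost over [0, L_x] whenever it lies in that interval. -/
theorem uniform_demand_optimal_flexible_portion
    (γt γa γw γo γv ta d H Vd Lx Tl lam : ℝ)
    (hγt : 0 < γt) (hγa : 0 < γa) (hγw : 0 < γw) (hγo : 0 < γo) (hγv : 0 < γv)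
    (hta : 0 < ta) (hd : 0 < d) (hH : 0 < H) (hVd : 0 < Vd) (hLx : 0 < Lx)
    (hTl : 0 ≤ Tl) (hlam : 0 < lam)
    (c : ℝ → ℝ)
    (hc : ∀ x, c x =
      γt * γa * ta * lam * (Lx - x) + γt * γw * lam * Lx * H / 2
      + γt * lam * Lx ^ 2 / (2 * Vd)
      + γt * (lam ^ 2 / 2) * H * (d / Vd) * x ^ 2
      + γo * Lx / H + γo * lam * d * x
      + (2 * γv / H) * (Lx / Vd + H * (d / Vd) * lam * x + Tl))
    (xuni : ℝ)
    (hxuni : xuni = (1 / (lam * H)) * (γa * Vd * ta / d - (γo / γt) * Vd - 2 * γv / γt))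
    (hmem : 0 ≤ xuni ∧ xuni ≤ Lx) :
    ∀ x ∈ Set.Icc (0:ℝ) Lx, c xuni ≤ c x :=
  uniform_demand_optimal_flexible_portion_general γt γa γw γo γv ta d H Vd Lx Tl lam hγt hd hH hVd
    hlam c hc xuni hxuni
end

section
/- Under triangular demand with density f(x) = (λ₀/L_x)·x for a constant λ₀ > 0 (so F(x) = λ₀·x²/(2·L_x)), suppose the quantity A = γ_a·V_d·t̄_a/d̄ − (γ_o/γ_t)·V_d − 2·γ_v/γ_t is positive, and let x*_tri = √(2·L_x·A/(λ₀·H)). If x*_tri ≤ L_x, then the total cost function c attains its minimum over [0, L_x] at x*_tri, i.e., c(x*_tri) ≤ c(x) for all x ∈ [0, L_x]. -/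
/-- Eq. (19): under triangular demand, the flexible route portion x*_tri
minimizes the total cost over [0, L_x] whenever it lies in that interval. -/
theorem triangular_demand_optimal_flexible_portion
    (γt γa γw γo γv ta d H Vd Lx Tl lam0 : ℝ)
    (hγt : 0 < γt) (hγa : 0 < γa) (hγw : 0 < γw) (hγo : 0 < γo) (hγv : 0 < γv)
    (hta : 0 < ta) (hd : 0 < d) (hH : 0 < H) (hVd : 0 < Vd) (hLx : 0 < Lx)
    (hTl : 0 ≤ Tl) (hlam0 : 0 < lam0)
    (c : ℝ → ℝ)
    (hc : ∀ x, c x =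
      γt * γa * ta * (lam0 / 2) * (Lx - x ^ 2 / Lx)
      + γt * γw * (lam0 * Lx / 2) * (H / 2)
      + γt * lam0 * Lx ^ 2 / (6 * Vd)
      + γt * H * (d / Vd) * lam0 ^ 2 * x ^ 4 / (8 * Lx ^ 2)
      + γo * Lx / H + γo * d * lam0 * x ^ 2 / (2 * Lx)
      + (2 * γv / H) * (Lx / Vd + H * (d / Vd) * lam0 * x ^ 2 / (2 * Lx) + Tl))
    (A : ℝ) (hA : A = γa * Vd * ta / d - (γo / γt) * Vd - 2 * γv / γt)
    (hApos : 0 < A)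
    (xtri : ℝ) (hxtri : xtri = Real.sqrt (2 * Lx * A / (lam0 * H)))
    (hle : xtri ≤ Lx) :
    ∀ x ∈ Set.Icc (0:ℝ) Lx, c xtri ≤ c x := by
  intro x hx
  have hsq : xtri ^ 2 = 2 * Lx * A / (lam0 * H) := by
    rw [hxtri, Real.sq_sqrt (by positivity)]
  have h2 : lam0 * H * xtri ^ 2 = 2 * Lx * A := by
    rw [hsq]; field_simp
  rw [hA] at h2
  have h3 : γt * d * lam0 * H * xtri ^ 2
      = 2 * Lx * (γt * γa * Vd * ta - γo * Vd * d - 2 * γv * d) := by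
    have := congrArg (fun z => γt * d * z) h2
    rw [show γt * d * lam0 * H * xtri ^ 2 = γt * d * (lam0 * H * xtri ^ 2) by ring, this]
    field_simp
  have hdiff : c x - c xtri
      = γt * H * (d / Vd) * lam0 ^ 2 / (8 * Lx ^ 2) * (x ^ 2 - xtri ^ 2) ^ 2 := by
    rw [hc, hc]
    field_simp
    linear_combination (x ^ 2 - xtri ^ 2) * lam0 * H * 48 * h3
  have key : 0 ≤ γt * H * (d / Vd) * lam0 ^ 2 / (8 * Lx ^ 2) * (x ^ 2 - xtri ^ 2) ^ 2 := by
    positivity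
  linarith [hdiff, key]
end
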